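/- For all x, y ∈ ℝ, the function b satisfies the fourth-order identity b_{xxxx}·b − 4·b_{xxx}·b_x + 3·b_{xx}² = −12·(b_{xx}·b − b_x²) − 3·(b_{yy}·b − b_y²), where all functions are evaluated at (x,y). -/

import Mathlib

/-!
Write `E = exp (-x²/2 + y²)`. Functions `E · (p(x) cos √3y + q(x) cosh √3x + r(x) √3 sinh √3x)`
with polynomial coefficients are closed under `∂ₓ`, which acts on the coefficients by
`(p, q, r) ↦ (p' - xp, q' - xq + 3r, r' - xr + q)`; likewise
`E · (p(y) cosh √3x + q(y) cos √3y + r(y) √3 sin √3y)` is closed under `∂_y`. Writing `b` in both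
forms makes every derivative in the identity explicit, and what remains is a polynomial identity
modulo `√3² = 3`, `cosh² - sinh² = 1` and `sin² + cos² = 1`.
-/

/-- First partial derivative (with respect to the first variable) of a function of two
real variables. -/
noncomputable def pd1 (f : ℝ → ℝ → ℝ) (x y : ℝ) : ℝ := deriv (fun t => f t y) x

/-- Second partial derivative (with respect to the second variable) of a function of two
real variables. -/
noncomputable def pd2 (f : ℝ → ℝ → ℝ) (x y : ℝ) : ℝ := deriv (fun t => f x t) y

/-- The blow-up series `b(t₂,t₃)` of the U(3) blow-up formula for manifolds of simple
type. -/
noncomputable def bFun (x y : ℝ) : ℝ :=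
  (1 / 3) * Real.exp (-x ^ 2 / 2 + y ^ 2) *
    (Real.cosh (Real.sqrt 3 * x) + 2 * Real.cos (Real.sqrt 3 * y))

open Polynomial Real

lemma pd1_eq_of_hasDerivAt {f f' : ℝ → ℝ → ℝ}
    (h : ∀ x y, HasDerivAt (fun t => f t y) (f' x y) x) : pd1 f = f' := by
  funext x y
  exact (h x y).deriv

lemma pd2_eq_of_hasDerivAt {f f' : ℝ → ℝ → ℝ}
    (h : ∀ x y, HasDerivAt (fun t => f x t) (f' x y) y) : pd2 f = f' := by
  funext x y
  exact (h x y).deriv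

lemma hasDerivAt_exp_mul {φ g : ℝ → ℝ} {φ' g' t : ℝ} (hφ : HasDerivAt φ φ' t)
    (hg : HasDerivAt g g' t) :
    HasDerivAt (fun t => exp (φ t) * g t) (exp (φ t) * (g' + φ' * g t)) t :=
  (hφ.exp.mul hg).congr_deriv (by ring)

lemma sqrt_three_mul_self : √3 * √3 = 3 := mul_self_sqrt (by norm_num)

noncomputable def xAnsatz (p q r : ℝ[X]) (x y : ℝ) : ℝ :=
  exp (-x ^ 2 / 2 + y ^ 2) *
    (p.eval x * cos (√3 * y) + q.eval x * cosh (√3 * x) + r.eval x * (√3 * sinh (√3 * x)))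

noncomputable def yAnsatz (p q r : ℝ[X]) (x y : ℝ) : ℝ :=
  exp (-x ^ 2 / 2 + y ^ 2) *
    (p.eval y * cosh (√3 * x) + q.eval y * cos (√3 * y) + r.eval y * (√3 * sin (√3 * y)))

lemma pd1_xAnsatz (p q r : ℝ[X]) :
    pd1 (xAnsatz p q r) =
      xAnsatz (derivative p - X * p) (derivative q - X * q + 3 * r)
        (derivative r - X * r + q) := by
  refine pd1_eq_of_hasDerivAt fun x y => ?_
  have hφ : HasDerivAt (fun t : ℝ => -t ^ 2 / 2 + y ^ 2) (-x) x := by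
    simpa [neg_div] using ((hasDerivAt_pow 2 x).div_const 2).neg.add_const (y ^ 2)
  have hg := (((p.hasDerivAt x).mul_const (cos (√3 * y))).add
    ((q.hasDerivAt x).mul ((hasDerivAt_id' x).const_mul √3 |>.cosh))).add
    ((r.hasDerivAt x).mul (((hasDerivAt_id' x).const_mul √3 |>.sinh).const_mul √3))
  refine (hasDerivAt_exp_mul hφ hg).congr_deriv ?_
  simp only [xAnsatz, Pi.add_apply, Pi.mul_apply, eval_add, eval_sub, eval_mul, eval_X, eval_ofNat]
  linear_combination (exp (-x ^ 2 / 2 + y ^ 2) * eval x r * cosh (√3 * x)) * sqrt_three_mul_self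

lemma pd2_yAnsatz (p q r : ℝ[X]) :
    pd2 (yAnsatz p q r) =
      yAnsatz (derivative p + 2 * X * p) (derivative q + 2 * X * q + 3 * r)
        (derivative r + 2 * X * r - q) := by
  refine pd2_eq_of_hasDerivAt fun x y => ?_
  have hφ : HasDerivAt (fun t : ℝ => -x ^ 2 / 2 + t ^ 2) (2 * y) y := by
    simpa using (hasDerivAt_pow 2 y).const_add (-x ^ 2 / 2)
  have hg := (((p.hasDerivAt y).mul_const (cosh (√3 * x))).add
    ((q.hasDerivAt y).mul ((hasDerivAt_id' y).const_mul √3 |>.cos))).add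
    ((r.hasDerivAt y).mul (((hasDerivAt_id' y).const_mul √3 |>.sin).const_mul √3))
  refine (hasDerivAt_exp_mul hφ hg).congr_deriv ?_
  simp only [yAnsatz, Pi.add_apply, Pi.mul_apply, eval_add, eval_sub, eval_mul, eval_X, eval_ofNat]
  linear_combination (exp (-x ^ 2 / 2 + y ^ 2) * eval y r * cos (√3 * y)) * sqrt_three_mul_self

lemma bFun_eq_xAnsatz : bFun = xAnsatz (C (2 / 3)) (C (1 / 3)) 0 := by
  funext x y
  simp only [bFun, xAnsatz, eval_C, eval_zero]
  ring

lemma bFun_eq_yAnsatz : bFun = yAnsatz (C (1 / 3)) (C (2 / 3)) 0 := by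
  funext x y
  simp only [bFun, yAnsatz, eval_C, eval_zero]
  ring

theorem stmt4 (x y : ℝ) :
    pd1 (pd1 (pd1 (pd1 bFun))) x y * bFun x y
      - 4 * pd1 (pd1 (pd1 bFun)) x y * pd1 bFun x y
      + 3 * (pd1 (pd1 bFun) x y) ^ 2 =
    -12 * (pd1 (pd1 bFun) x y * bFun x y - (pd1 bFun x y) ^ 2)
      - 3 * (pd2 (pd2 bFun) x y * bFun x y - (pd2 bFun x y) ^ 2) := by
  rw [show pd2 bFun = pd2 (yAnsatz (C (1 / 3)) (C (2 / 3)) 0) by rw [← bFun_eq_yAnsatz]]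
  simp only [bFun_eq_xAnsatz, pd1_xAnsatz, pd2_yAnsatz, xAnsatz, yAnsatz, derivative_add,
    derivative_sub, derivative_mul, derivative_X, derivative_C, derivative_zero, derivative_ofNat,
    derivative_one, eval_add, eval_sub, eval_mul, eval_X, eval_C, eval_zero, eval_one, eval_ofNat]
  set E := exp (-x ^ 2 / 2 + y ^ 2)
  have hcosh : cosh (√3 * x) ^ 2 - sinh (√3 * x) ^ 2 = 1 := cosh_sq_sub_sinh_sq _
  have hcos : sin (√3 * y) ^ 2 + cos (√3 * y) ^ 2 = 1 := sin_sq_add_cos_sq _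
  linear_combination
    (-(4 / 3) * (sinh (√3 * x) ^ 2 + sin (√3 * y) ^ 2) * E ^ 2) * sqrt_three_mul_self
      + 4 * E ^ 2 * hcosh - 4 * E ^ 2 * hcos
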